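/- Let k ≥ 2 and let n be odd. Then there exists no nega-ℤ_{2^k}-bent function f : 𝔽_{2^n} → ℤ/2^kℤ; that is, for every f : 𝔽_{2^n} → ℤ/2^kℤ there exist u ∈ 𝔽_{2^n} and a nonzero c ∈ ℤ/2^kℤ with |K_f(c,u)|² ≠ 2^n. -/

import Mathlib

/-!
Take u = 0 and c = 2^{k-1}. Since c is even, c₀ = 0 kills the trace and σ factors, and
ζ^{c·f(x)} = (−1)^{f(x)}, so K_f(c, 0) = Σ_x (−1)^{f(x)} is an integer. An integer square
has even 2-adic valuation, so it is never 2^n for odd n.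
-/

noncomputable section

/-- The absolute trace Tr(x) = x + x² + x⁴ + … + x^{2^{n−1}}. -/
def Tr {F : Type} [Field F] (n : ℕ) (x : F) : F :=
  ∑ i ∈ Finset.range n, x ^ (2 ^ i)

/-- σ(c,x) = Σ_{0 ≤ i < j ≤ n−1} (cx)^{2^i} (cx)^{2^j} -/
def sig {F : Type} [Field F] (n : ℕ) (c x : F) : F :=
  ∑ j ∈ Finset.range n, ∑ i ∈ Finset.range j, (c * x) ^ (2 ^ i) * (c * x) ^ (2 ^ j)

/-- ι(e): the integer lift of e ∈ {0,1} ⊆ F. -/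
def iotaN {F : Type} [Field F] [DecidableEq F] (e : F) : ℕ :=
  if e = 1 then 1 else 0

/-- ζ = e^{2πi/2^k}. -/
def zeta (k : ℕ) : ℂ := Complex.exp (2 * Real.pi * Complex.I / 2 ^ k)

/-- c₀ ∈ {0,1} ⊆ F equals 1 if c is odd and 0 if c is even. -/
def czero {F : Type} [Field F] (k : ℕ) (c : ZMod (2 ^ k)) : F :=
  if c.val % 2 = 1 then 1 else 0

/-- The nega-ℤ_{2^k}-Hadamard transform
K_f(c,u) = Σ_{x ∈ F} (−1)^{ι(Tr(ux)) + ι(σ(c₀,x))} ζ^{c·f(x)} i^{ι(Tr(c₀x))}. -/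
def negaK {F : Type} [Field F] [Fintype F] [DecidableEq F] (n k : ℕ)
    (f : F → ZMod (2 ^ k)) (c : ZMod (2 ^ k)) (u : F) : ℂ :=
  ∑ x : F, (-1 : ℂ) ^ (iotaN (Tr n (u * x)) + iotaN (sig n (czero k c) x)) *
    zeta k ^ (c * f x).val * Complex.I ^ (iotaN (Tr n (czero k c * x)))

lemma zeta_isPrimitiveRoot (k : ℕ) : IsPrimitiveRoot (zeta k) (2 ^ k) := by
  simpa [zeta] using Complex.isPrimitiveRoot_exp (2 ^ k) (by positivity)

lemma zeta_pow_two_pow_pred {k : ℕ} (hk : 1 ≤ k) : zeta k ^ 2 ^ (k - 1) = -1 := by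
  refine IsPrimitiveRoot.eq_neg_one_of_two_right ?_
  have := (zeta_isPrimitiveRoot k).pow_of_dvd (p := 2 ^ (k - 1)) (by positivity)
    (pow_dvd_pow 2 (Nat.sub_le k 1))
  rwa [Nat.pow_div (Nat.sub_le k 1) two_pos, Nat.sub_sub_self hk, pow_one] at this

lemma zeta_pow_val_mul (k : ℕ) (a b : ZMod (2 ^ k)) :
    zeta k ^ (a * b).val = zeta k ^ (a.val * b.val) := by
  rw [ZMod.val_mul, ← pow_eq_pow_mod _ (zeta_isPrimitiveRoot k).pow_eq_one]

lemma sq_ne_two_pow_of_odd {n : ℕ} (hn : Odd n) (m : ℕ) : m ^ 2 ≠ 2 ^ n := by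
  intro h
  have := congrArg (padicValNat 2) h
  rw [padicValNat.pow, padicValNat.prime_pow] at this
  exact Nat.not_even_iff_odd.2 hn ⟨padicValNat 2 m, by omega⟩

lemma norm_intCast_sq_ne_two_pow {n : ℕ} (hn : Odd n) (S : ℤ) : ‖(S : ℂ)‖ ^ 2 ≠ 2 ^ n := by
  rw [Complex.norm_intCast, ← Int.cast_abs, Int.abs_eq_natAbs]
  exact_mod_cast sq_ne_two_pow_of_odd hn S.natAbs

section Transform

variable {F : Type} [Field F]

lemma Tr_zero (n : ℕ) : Tr n (0 : F) = 0 :=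
  Finset.sum_eq_zero fun i _ => zero_pow (pow_ne_zero i two_ne_zero)

lemma sig_zero_left (n : ℕ) (x : F) : sig n 0 x = 0 := by
  simp [sig]

lemma iotaN_zero [DecidableEq F] : iotaN (0 : F) = 0 := by
  simp [iotaN]

lemma czero_eq_zero_of_even {k : ℕ} {c : ZMod (2 ^ k)} (hc : Even c.val) : czero k c = (0 : F) := by
  simp [czero, Nat.even_iff.1 hc]

lemma negaK_zero_of_even [Fintype F] [DecidableEq F] (n k : ℕ) (f : F → ZMod (2 ^ k))
    {c : ZMod (2 ^ k)} (hc : Even c.val) :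
    negaK n k f c 0 = ∑ x : F, zeta k ^ (c * f x).val := by
  simp [negaK, czero_eq_zero_of_even hc, Tr_zero, sig_zero_left, iotaN_zero]

end Transform

lemma zeta_pow_val_two_pow_pred_mul {k : ℕ} (hk : 1 ≤ k) (a : ZMod (2 ^ k)) :
    zeta k ^ (((2 ^ (k - 1) : ℕ) : ZMod (2 ^ k)) * a).val = (-1) ^ a.val := by
  rw [zeta_pow_val_mul, ZMod.val_natCast_of_lt (Nat.pow_lt_pow_right one_lt_two (by omega)),
    pow_mul, zeta_pow_two_pow_pred hk]

theorem stmt12_general {F : Type} [Field F] [Fintype F] [DecidableEq F] (n k : ℕ)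
    (hk : 2 ≤ k) (hn : Odd n)
    (f : F → ZMod (2 ^ k)) :
    ∃ u : F, ∃ c : ZMod (2 ^ k), c ≠ 0 ∧
      ‖negaK n k f c u‖ ^ 2 ≠ 2 ^ n := by
  have hlt : 2 ^ (k - 1) < 2 ^ k := Nat.pow_lt_pow_right one_lt_two (by omega)
  refine ⟨0, (2 ^ (k - 1) : ℕ), ?_, ?_⟩
  · rw [Ne, ZMod.natCast_eq_zero_iff]
    exact Nat.not_dvd_of_pos_of_lt (by positivity) hlt
  · have heven : Even ((2 ^ (k - 1) : ℕ) : ZMod (2 ^ k)).val := by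
      rw [ZMod.val_natCast_of_lt hlt]
      exact (Nat.even_pow' (by omega)).2 even_two
    rw [negaK_zero_of_even n k f heven]
    simp only [zeta_pow_val_two_pow_pred_mul (by omega : 1 ≤ k)]
    exact_mod_cast norm_intCast_sq_ne_two_pow hn (∑ x, (-1) ^ (f x).val)

/-- For k ≥ 2 and odd n there is no nega-ℤ_{2^k}-bent function
f : 𝔽_{2^n} → ℤ/2^kℤ: every f has some u and nonzero c with
|K_f(c,u)|² ≠ 2^n. -/
theorem stmt12 {F : Type} [Field F] [Fintype F] [DecidableEq F] (n k : ℕ)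
    (hk : 2 ≤ k) (hn : Odd n) (hF : Fintype.card F = 2 ^ n)
    (f : F → ZMod (2 ^ k)) :
    ∃ u : F, ∃ c : ZMod (2 ^ k), c ≠ 0 ∧
      ‖negaK n k f c u‖ ^ 2 ≠ 2 ^ n :=
  stmt12_general n k hk hn f
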